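/- arXiv:2405.16507 — 3 statements merged into one kernel-verified Lean document; each statement's English description precedes it below -/
import Mathlib

section
/- Let G be a directed graph on n vertices with adjacency matrix A having nonnegative real entries. Then G is acyclic if and only if Tr((I + (β/n)·A∘A)^n) = n, where β > 0 and A∘A denotes the entrywise (Hadamard) square of A. -/
/-!
Put `B = (β/n) • (A ∘ A)`: a nonnegative matrix with the same support as `A`. Since `I` and `B`
commute, the binomial theorem gives `Tr((I + B)^n) = n + ∑_{k=1}^n C(n,k) Tr(B^k)`, a sum of
nonnegative terms, and `Tr(B^k) > 0` exactly when the graph has a closed walk of length `k`. So the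
trace equals `n` iff there is no closed walk of length between `1` and `n`, which is acyclicity:
a closed walk longer than `n` repeats a vertex, and cutting out the part between the two visits
leaves a shorter closed walk.
-/

open Finset Matrix Relation

theorem Matrix.mul_apply_pos_iff_of_nonneg {ι κ μ R : Type*} [Fintype κ] [CommRing R]
    [LinearOrder R] [IsStrictOrderedRing R] {M : Matrix ι κ R} {N : Matrix κ μ R}
    (hM : ∀ i k, 0 ≤ M i k) (hN : ∀ k j, 0 ≤ N k j) (i : ι) (j : μ) :
    0 < (M * N) i j ↔ ∃ k, 0 < M i k ∧ 0 < N k j := by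
  rw [mul_apply, sum_pos_iff_of_nonneg fun k _ => mul_nonneg (hM i k) (hN k j)]
  exact ⟨fun ⟨k, _, hk⟩ => ⟨k, pos_of_mul_pos_left hk (hN k j), pos_of_mul_pos_right hk (hM i k)⟩,
    fun ⟨k, hik, hkj⟩ => ⟨k, mem_univ k, mul_pos hik hkj⟩⟩

theorem Matrix.trace_one_add_pow {ι R : Type*} [Fintype ι] [DecidableEq ι] [Semiring R]
    (B : Matrix ι ι R) (N : ℕ) :
    trace ((1 + B) ^ N) =
      ∑ k ∈ range N, (N.choose (k + 1) : R) * trace (B ^ (k + 1)) + Fintype.card ι := by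
  rw [add_comm, (Commute.one_right B).add_pow, trace_sum, sum_range_succ']
  simp [trace_one, ← Nat.cast_comm, ← nsmul_eq_mul]

section NonnegPow

variable {ι R : Type*} [Fintype ι] [DecidableEq ι] [CommRing R] [LinearOrder R]
  [IsStrictOrderedRing R] {B : Matrix ι ι R} (hB : ∀ i j, 0 ≤ B i j)
include hB

theorem Matrix.pow_add_apply_pos_iff (k m : ℕ) (i j : ι) :
    0 < (B ^ (k + m)) i j ↔ ∃ l, 0 < (B ^ k) i l ∧ 0 < (B ^ m) l j := by
  rw [pow_add, mul_apply_pos_iff_of_nonneg (pow_apply_nonneg hB k) (pow_apply_nonneg hB m)]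

theorem Matrix.transGen_of_pow_succ_apply_pos {k : ℕ} {i j : ι} (h : 0 < (B ^ (k + 1)) i j) :
    TransGen (fun i j => 0 < B i j) i j := by
  induction k generalizing j with
  | zero => exact .single (by simpa using h)
  | succ k ih =>
    obtain ⟨l, hil, hlj⟩ := (pow_add_apply_pos_iff hB (k + 1) 1 i j).1 h
    exact (ih hil).tail (by simpa using hlj)

theorem Matrix.exists_pow_succ_apply_pos_of_transGen {i j : ι}
    (h : TransGen (fun i j => 0 < B i j) i j) : ∃ k, 0 < (B ^ (k + 1)) i j := by
  induction h with
  | single hij => exact ⟨0, by simpa using hij⟩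
  | tail _ hlj ih =>
    obtain ⟨k, hk⟩ := ih
    exact ⟨k + 1, (pow_add_apply_pos_iff hB (k + 1) 1 _ _).2 ⟨_, hk, by simpa using hlj⟩⟩

theorem Matrix.exists_lt_card_pow_succ_apply_pos {k : ℕ} {i : ι} (h : 0 < (B ^ (k + 1)) i i) :
    ∃ m < Fintype.card ι, 0 < (B ^ (m + 1)) i i := by
  induction k using Nat.strong_induction_on with
  | _ k ih =>
  by_cases hk : k < Fintype.card ι
  · exact ⟨k, hk, h⟩
  -- `visit t` is the vertex reached after `t` steps of a closed walk of length `k + 1`.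
  have hsplit (t : Fin (k + 1)) : ∃ l, 0 < (B ^ (t : ℕ)) i l ∧ 0 < (B ^ (k + 1 - t)) l i :=
    (pow_add_apply_pos_iff hB _ _ i i).1 (by rwa [Nat.add_sub_cancel' t.is_lt.le])
  choose visit hvisit using hsplit
  obtain ⟨s, t, hst, hvisit_eq⟩ := Fintype.exists_ne_map_eq_of_card_lt visit
    (by rw [Fintype.card_fin]; omega)
  wlog hlt : s < t generalizing s t
  · exact this t s hst.symm hvisit_eq.symm (lt_of_le_of_ne (not_lt.1 hlt) hst.symm)
  have hshort : 0 < (B ^ (s + (k + 1 - t))) i i :=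
    (pow_add_apply_pos_iff hB _ _ i i).2 ⟨visit s, (hvisit s).1, hvisit_eq ▸ (hvisit t).2⟩
  have hlen : (s : ℕ) + (k - t) + 1 = s + (k + 1 - t) := by omega
  exact ih _ (by omega) (hlen ▸ hshort)

theorem Matrix.trace_pow_eq_zero_iff_of_nonneg (k : ℕ) :
    trace (B ^ k) = 0 ↔ ∀ i, (B ^ k) i i = 0 := by
  simpa [trace] using sum_eq_zero_iff_of_nonneg (s := univ) fun i _ => pow_apply_nonneg hB k i i

theorem Matrix.acyclic_iff_forall_trace_pow_succ_eq_zero :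
    (∀ v, ¬ TransGen (fun i j => 0 < B i j) v v) ↔
      ∀ k < Fintype.card ι, trace (B ^ (k + 1)) = 0 := by
  refine ⟨fun hacyc k _ => (trace_pow_eq_zero_iff_of_nonneg hB _).2 fun i => ?_,
    fun htrace v hv => ?_⟩
  · by_contra hne
    exact hacyc i (transGen_of_pow_succ_apply_pos hB ((pow_apply_nonneg hB _ i i).lt_of_ne' hne))
  · obtain ⟨k, hk⟩ := exists_pow_succ_apply_pos_of_transGen hB hv
    obtain ⟨m, hm, hpos⟩ := exists_lt_card_pow_succ_apply_pos hB hk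
    exact hpos.ne' ((trace_pow_eq_zero_iff_of_nonneg hB _).1 (htrace m hm) v)

theorem Matrix.trace_one_add_pow_eq_card_iff (N : ℕ) :
    trace ((1 + B) ^ N) = (Fintype.card ι : R) ↔ ∀ k < N, trace (B ^ (k + 1)) = 0 := by
  have hterm (k : ℕ) : 0 ≤ (N.choose (k + 1) : R) * trace (B ^ (k + 1)) :=
    mul_nonneg (Nat.cast_nonneg _) (sum_nonneg fun i _ => pow_apply_nonneg hB _ i i)
  rw [trace_one_add_pow, add_eq_right, sum_eq_zero_iff_of_nonneg fun k _ => hterm k]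
  refine forall_congr' fun k => ?_
  have hchoose : (N.choose (k + 1) : R) ≠ 0 ↔ k < N := by
    rw [Nat.cast_ne_zero, Nat.choose_ne_zero_iff]; omega
  rw [mem_range, mul_eq_zero, ← hchoose]
  tauto

end NonnegPow

theorem acyclic_iff_trace_eq_general (n : ℕ)
    (A : Matrix (Fin n) (Fin n) ℝ) (hA : ∀ i j, 0 ≤ A i j)
    (β : ℝ) (hβ : 0 < β) :
    (∀ v : Fin n, ¬ Relation.TransGen (fun i j => 0 < A i j) v v) ↔
      Matrix.trace ((1 + (β / (n : ℝ)) • (Matrix.hadamard A A)) ^ n) = (n : ℝ) := by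
  set B := (β / (n : ℝ)) • hadamard A A
  have hB (i j : Fin n) : 0 ≤ B i j :=
    mul_nonneg (div_nonneg hβ.le n.cast_nonneg) (mul_self_nonneg (A i j))
  have hedge : (fun i j => 0 < A i j) = fun i j => 0 < B i j := by
    funext i j
    have hc : 0 < β / n := div_pos hβ (Nat.cast_pos.2 i.pos)
    simp [B, mul_pos_iff_of_pos_left hc, mul_self_pos, (hA i j).lt_iff_ne']
  rw [hedge, acyclic_iff_forall_trace_pow_succ_eq_zero hB, ← trace_one_add_pow_eq_card_iff hB,
    Fintype.card_fin]

/-- A directed graph on `n` vertices with nonnegative adjacency matrix `A`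
(edge `i → j` iff `A i j > 0`) is acyclic iff
`Tr((I + (β/n) • (A ∘ A))^n) = n`, where `A ∘ A` is the Hadamard square. -/
theorem acyclic_iff_trace_eq (n : ℕ) (hn : 0 < n)
    (A : Matrix (Fin n) (Fin n) ℝ) (hA : ∀ i j, 0 ≤ A i j)
    (β : ℝ) (hβ : 0 < β) :
    (∀ v : Fin n, ¬ Relation.TransGen (fun i j => 0 < A i j) v v) ↔
      Matrix.trace ((1 + (β / (n : ℝ)) • (Matrix.hadamard A A)) ^ n) = (n : ℝ) :=
  acyclic_iff_trace_eq_general n A hA β hβ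
end

section
/- Let X, Y be binary random variables in a structural causal model where Y = f(X, U) with U independent of X. Pearl's probability of necessity and sufficiency PNS = P(Y_{X=1} = 1, Y_{X=0} = 0) satisfies the bounds max(0, P(Y=1|do(X=1)) − P(Y=1|do(X=0))) ≤ PNS ≤ min(P(Y=1|do(X=1)), P(Y=0|do(X=0))). -/
/-! The bounds only involve the joint law of the potential outcomes `f true U` and `f false U`:
`PNS = P(f true U ∧ ¬ f false U)` is at most either marginal by monotonicity, and at least
`P(f true U) - P(f false U)` because `P(A) = P(A ∧ B) + P(A ∧ ¬B)` and `P(A ∧ B) ≤ P(B)`. -/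

open Classical in
/-- Probability of an event on a finite weighted space. -/
noncomputable def pr {Ω : Type} [Fintype Ω] (p : Ω → ℝ) (A : Ω → Prop) : ℝ :=
  ∑ ω, if A ω then p ω else 0

section WeightedProbability

variable {Ω : Type} [Fintype Ω] (p : Ω → ℝ)

theorem pr_nonneg (hp : ∀ ω, 0 ≤ p ω) (A : Ω → Prop) : 0 ≤ pr p A :=
  Finset.sum_nonneg fun ω _ => by split_ifs <;> simp [hp ω]

theorem pr_mono (hp : ∀ ω, 0 ≤ p ω) {A B : Ω → Prop} (h : ∀ ω, A ω → B ω) :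
    pr p A ≤ pr p B :=
  Finset.sum_le_sum fun ω _ => by
    by_cases hA : A ω
    · simp [hA, h ω hA]
    · split_ifs <;> simp [hp ω]

theorem pr_and_add_pr_and_not (A B : Ω → Prop) :
    pr p (fun ω => A ω ∧ B ω) + pr p (fun ω => A ω ∧ ¬ B ω) = pr p A := by
  unfold pr
  rw [← Finset.sum_add_distrib]
  refine Finset.sum_congr rfl fun ω _ => ?_
  by_cases hA : A ω <;> by_cases hB : B ω <;> simp [hA, hB]

theorem pr_sub_pr_le_pr_and_not (hp : ∀ ω, 0 ≤ p ω) (A B : Ω → Prop) :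
    pr p A - pr p B ≤ pr p (fun ω => A ω ∧ ¬ B ω) := by
  have hAB : pr p (fun ω => A ω ∧ B ω) ≤ pr p B := pr_mono p hp fun _ h => h.2
  linarith [pr_and_add_pr_and_not p A B]

end WeightedProbability

theorem pns_bounds_general {Ω N : Type} [Fintype Ω] (p : Ω → ℝ)
    (hp : ∀ ω, 0 ≤ p ω)
    (U : Ω → N) (f : Bool → N → Bool) :
    max 0 (pr p (fun ω => f true (U ω) = true) -
        pr p (fun ω => f false (U ω) = true)) ≤
      pr p (fun ω => f true (U ω) = true ∧ f false (U ω) = false) ∧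
    pr p (fun ω => f true (U ω) = true ∧ f false (U ω) = false) ≤
      min (pr p (fun ω => f true (U ω) = true))
        (pr p (fun ω => f false (U ω) = false)) := by
  refine ⟨max_le (pr_nonneg p hp _) ?_,
    le_min (pr_mono p hp fun _ h => h.1) (pr_mono p hp fun _ h => h.2)⟩
  simpa only [Bool.not_eq_true] using
    pr_sub_pr_le_pr_and_not p hp (fun ω => f true (U ω) = true) (fun ω => f false (U ω) = true)

/-- Pearl's bounds on the probability of necessity and sufficiency: in an SCM with
binary `X`, `Y = f(X,U)` and `U` independent of `X`,
`max(0, P(Y=1|do(X=1)) − P(Y=1|do(X=0))) ≤ PNS ≤ min(P(Y=1|do(X=1)), P(Y=0|do(X=0)))`,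
where `PNS = P(Y_{X=1} = 1, Y_{X=0} = 0)` and `P(Y=y|do(X=x)) = P(f(x,U)=y)`. -/
theorem pns_bounds {Ω N : Type} [Fintype Ω] (p : Ω → ℝ)
    (hp : ∀ ω, 0 ≤ p ω) (hsum : ∑ ω, p ω = 1)
    (U : Ω → N) (X Y : Ω → Bool) (f : Bool → N → Bool)
    (hY : ∀ ω, Y ω = f (X ω) (U ω))
    (hindep : ∀ (x : Bool) (n : N),
      pr p (fun ω => X ω = x ∧ U ω = n) =
        pr p (fun ω => X ω = x) * pr p (fun ω => U ω = n)) :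
    max 0 (pr p (fun ω => f true (U ω) = true) -
        pr p (fun ω => f false (U ω) = true)) ≤
      pr p (fun ω => f true (U ω) = true ∧ f false (U ω) = false) ∧
    pr p (fun ω => f true (U ω) = true ∧ f false (U ω) = false) ≤
      min (pr p (fun ω => f true (U ω) = true))
        (pr p (fun ω => f false (U ω) = false)) :=
  pns_bounds_general p hp U f
end

section
/- Composition of two Causal CGM graphs preserves acyclicity: if G₁ is a DAG on vertex set V₁ and G₂ is a DAG on vertex set V₂, with V₁ ∩ V₂ = S, and every edge of G₁ incident to S is incoming to S while every edge of G₂ incident to S is outgoing from S, then the union graph G₁ ∪ G₂ on V₁ ∪ V₂ is a DAG. -/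
/-!
An `E₁`-edge never starts in `S = V₁ ∩ V₂`, while an `E₂`-edge ends in `V₂` and an `E₁`-edge
starts in `V₁`; hence no `E₂`-edge is followed by an `E₁`-edge. So every path of the union runs
through `E₁` first and `E₂` afterwards. A cycle of that shape lies in `E₁` or in `E₂`, or else
its last edge (in `E₂`) is followed by its first edge (in `E₁`), which is impossible.
-/

namespace Relation

variable {α : Type*} {r s : α → α → Prop}

theorem TransGen.or_split (hsr : ∀ a b c, s a b → ¬ r b c) {a c : α}
    (h : TransGen (fun u w => r u w ∨ s u w) a c) :
    TransGen r a c ∨ ∃ b, ReflTransGen r a b ∧ TransGen s b c := by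
  induction h with
  | single hac =>
    rcases hac with hr | hs
    · exact .inl (.single hr)
    · exact .inr ⟨a, .refl, .single hs⟩
  | @tail c d _ hcd ih =>
    rcases hcd with hr | hs
    · rcases ih with hac | ⟨b, -, hbc⟩
      · exact .inl (hac.tail hr)
      · obtain ⟨z, -, hzc⟩ := TransGen.tail'_iff.mp hbc
        exact absurd hr (hsr z c d hzc)
    · rcases ih with hac | ⟨b, hab, hbc⟩
      · exact .inr ⟨c, hac.to_reflTransGen, .single hs⟩
      · exact .inr ⟨b, hab, hbc.tail hs⟩

theorem not_transGen_or_self (hr : ∀ a, ¬ TransGen r a a) (hs : ∀ a, ¬ TransGen s a a)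
    (hsr : ∀ a b c, s a b → ¬ r b c) (a : α) :
    ¬ TransGen (fun u w => r u w ∨ s u w) a a := by
  intro h
  rcases h.or_split hsr with haa | ⟨b, hab, hba⟩
  · exact hr a haa
  rcases ReflTransGen.cases_head_iff.mp hab with rfl | ⟨y, hay, -⟩
  · exact hs a hba
  · obtain ⟨z, -, hza⟩ := TransGen.tail'_iff.mp hba
    exact hsr z a y hza hay

end Relation

theorem dag_composition_general {V : Type} (V1 V2 : Set V)
    (E1 E2 : V → V → Prop)
    (hE1 : ∀ u w, E1 u w → u ∈ V1 ∧ w ∈ V1)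
    (hE2 : ∀ u w, E2 u w → u ∈ V2 ∧ w ∈ V2)
    (hacyc1 : ∀ v : V, ¬ Relation.TransGen E1 v v)
    (hacyc2 : ∀ v : V, ¬ Relation.TransGen E2 v v)
    (hint1 : ∀ u w, E1 u w → (u ∈ V1 ∩ V2 ∨ w ∈ V1 ∩ V2) →
      w ∈ V1 ∩ V2 ∧ u ∉ V1 ∩ V2) :
    ∀ v : V, ¬ Relation.TransGen (fun u w => E1 u w ∨ E2 u w) v v := by
  refine Relation.not_transGen_or_self hacyc1 hacyc2 fun a b c hab hbc => ?_
  have hbS : b ∈ V1 ∩ V2 := ⟨(hE1 b c hbc).1, (hE2 a b hab).2⟩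
  exact (hint1 b c hbc (.inl hbS)).2 hbS

/-- Composition of two DAGs preserves acyclicity: if every edge of `G₁` touching
`S = V₁ ∩ V₂` is incoming to `S` (head in `S`, tail outside `S`) and every edge of
`G₂` touching `S` is outgoing from `S` (tail in `S`, head outside `S`), then the
union graph on `V₁ ∪ V₂` is a DAG. -/
theorem dag_composition {V : Type} [Fintype V] (V1 V2 : Set V)
    (E1 E2 : V → V → Prop)
    (hE1 : ∀ u w, E1 u w → u ∈ V1 ∧ w ∈ V1)
    (hE2 : ∀ u w, E2 u w → u ∈ V2 ∧ w ∈ V2)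
    (hacyc1 : ∀ v : V, ¬ Relation.TransGen E1 v v)
    (hacyc2 : ∀ v : V, ¬ Relation.TransGen E2 v v)
    (hint1 : ∀ u w, E1 u w → (u ∈ V1 ∩ V2 ∨ w ∈ V1 ∩ V2) →
      w ∈ V1 ∩ V2 ∧ u ∉ V1 ∩ V2)
    (hint2 : ∀ u w, E2 u w → (u ∈ V1 ∩ V2 ∨ w ∈ V1 ∩ V2) →
      u ∈ V1 ∩ V2 ∧ w ∉ V1 ∩ V2) :
    ∀ v : V, ¬ Relation.TransGen (fun u w => E1 u w ∨ E2 u w) v v :=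
  dag_composition_general V1 V2 E1 E2 hE1 hE2 hacyc1 hacyc2 hint1
end
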